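/- arXiv:2202.13732 — 3 statements merged into one kernel-verified Lean document; each statement's English description precedes it below -/
import Mathlib

section
/- Let H be a real Hilbert space, let F : ℝ → H be differentiable with F(t) ≠ 0 for all t, and let S, A : ℝ → (H →L H) be families of bounded linear operators such that: S is differentiable (in the operator norm) with derivative S′, each S(t) is self-adjoint (⟨S(t)v, w⟩ = ⟨v, S(t)w⟩ for all v,w), each A(t) is skew-adjoint (⟨A(t)v, w⟩ = −⟨v, A(t)w⟩ for all v,w), and F′(t) = S(t)F(t) + A(t)F(t) for all t. Define the frequency function N(t) = −⟨S(t)F(t), F(t)⟩ / ‖F(t)‖². Then: (i) (1/2) d/dt ‖F(t)‖² + N(t)‖F(t)‖² = 0 for all t; and (ii) N is differentiable with N′(t) ≤ (⟨−S′(t)F(t), F(t)⟩ − ⟨[S(t),A(t)]F(t), F(t)⟩) / ‖F(t)‖² for all t, where [S,A] = S∘A − A∘S is the commutator. -/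
open scoped RealInnerProductSpace

/-!
Along the flow `F' = S F + A F` the skew part `A` does not change `‖F‖²`, which gives (i).
Differentiating `⟪S F, F⟫` produces `⟪S' F, F⟫ + 2‖S F‖² + ⟪[S, A] F, F⟫`, so the quotient rule
gives `N' = (⟪-S' F, F⟫ - ⟪[S, A] F, F⟫) / ‖F‖² - 2 (‖S F‖² ‖F‖² - ⟪S F, F⟫²) / ‖F‖⁴`, and the last
term is nonpositive by Cauchy–Schwarz.
-/

section

variable {H : Type*} [NormedAddCommGroup H] [InnerProductSpace ℝ H]

theorem real_inner_sq_le_norm_sq_mul_norm_sq (x y : H) : ⟪x, y⟫ ^ 2 ≤ ‖x‖ ^ 2 * ‖y‖ ^ 2 := by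
  rw [← mul_pow, ← sq_abs]
  exact pow_le_pow_left₀ (abs_nonneg _) (abs_real_inner_le_norm x y) 2

theorem inner_apply_self_eq_zero_of_skew {A : H →L[ℝ] H}
    (hA : ∀ v w : H, ⟪A v, w⟫ = -⟪v, A w⟫) (v : H) : ⟪A v, v⟫ = 0 := by
  have h := hA v v
  rw [real_inner_comm (A v)] at h
  linarith

theorem inner_commutator_apply_self {S A : H →L[ℝ] H}
    (hS : ∀ v w : H, ⟪S v, w⟫ = ⟪v, S w⟫) (hA : ∀ v w : H, ⟪A v, w⟫ = -⟪v, A w⟫) (v : H) :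
    ⟪(S ∘L A - A ∘L S) v, v⟫ = 2 * ⟪S v, A v⟫ := by
  rw [sub_apply, inner_sub_left, ContinuousLinearMap.comp_apply,
    ContinuousLinearMap.comp_apply, hS (A v), hA (S v), real_inner_comm (A v)]
  ring

theorem hasDerivAt_norm_sq_of_skew {F : ℝ → H} {S A : H →L[ℝ] H} {t : ℝ}
    (hA : ∀ v w : H, ⟪A v, w⟫ = -⟪v, A w⟫) (hF : HasDerivAt F (S (F t) + A (F t)) t) :
    HasDerivAt (‖F ·‖ ^ 2) (2 * ⟪S (F t), F t⟫) t := by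
  refine hF.norm_sq.congr_deriv ?_
  rw [inner_add_right, real_inner_comm (A (F t)), inner_apply_self_eq_zero_of_skew hA,
    real_inner_comm, add_zero]

theorem hasDerivAt_inner_apply_self {F : ℝ → H} {F' : H} {S : ℝ → H →L[ℝ] H}
    {S' : H →L[ℝ] H} {t : ℝ} (hS : HasDerivAt S S' t) (hF : HasDerivAt F F' t)
    (hSsym : ∀ v w : H, ⟪S t v, w⟫ = ⟪v, S t w⟫) :
    HasDerivAt (fun s => ⟪S s (F s), F s⟫) (⟪S' (F t), F t⟫ + 2 * ⟪S t (F t), F'⟫) t := by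
  refine ((hS.clm_apply hF).inner ℝ hF).congr_deriv ?_
  rw [inner_add_left, hSsym F' (F t), real_inner_comm (S t (F t)) F']
  ring

end

theorem frequency_function_estimate_general {H : Type*}
    [NormedAddCommGroup H] [InnerProductSpace ℝ H]
    (F F' : ℝ → H) (S S' A : ℝ → H →L[ℝ] H) (N : ℝ → ℝ)
    (hF : ∀ t, HasDerivAt F (F' t) t)
    (hFne : ∀ t, F t ≠ 0)
    (hS : ∀ t, HasDerivAt S (S' t) t)
    (hSsym : ∀ t, ∀ v w : H, ⟪S t v, w⟫ = ⟪v, S t w⟫)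
    (hAskew : ∀ t, ∀ v w : H, ⟪A t v, w⟫ = -⟪v, A t w⟫)
    (heq : ∀ t, F' t = S t (F t) + A t (F t))
    (hN : ∀ t, N t = -⟪S t (F t), F t⟫ / ‖F t‖ ^ 2) :
    (∀ t, HasDerivAt (fun s => ‖F s‖ ^ 2) (-(2 * N t * ‖F t‖ ^ 2)) t) ∧
    (∀ t, ∃ d : ℝ, HasDerivAt N d t ∧
      d ≤ (⟪-(S' t (F t)), F t⟫
            - ⟪(S t ∘L A t - A t ∘L S t) (F t), F t⟫) / ‖F t‖ ^ 2) := by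
  have hpos : ∀ t, 0 < ‖F t‖ ^ 2 := fun t => by positivity [norm_pos_iff.mpr (hFne t)]
  have henergy : ∀ t, HasDerivAt (‖F ·‖ ^ 2) (2 * ⟪S t (F t), F t⟫) t := fun t =>
    hasDerivAt_norm_sq_of_skew (hAskew t) (heq t ▸ hF t)
  refine ⟨fun t => ?_, fun t => ?_⟩
  · convert henergy t using 1
    rw [hN t]
    field_simp [norm_ne_zero_iff.mpr (hFne t)]
  · have hquad := hasDerivAt_inner_apply_self (hS t) (hF t) (hSsym t)
    rw [show N = fun s => -⟪S s (F s), F s⟫ / ‖F s‖ ^ 2 from funext hN]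
    refine ⟨_, hquad.neg.div (henergy t) (hpos t).ne', ?_⟩
    have hCS := real_inner_sq_le_norm_sq_mul_norm_sq (S t (F t)) (F t)
    rw [heq, inner_add_right, mul_add, ← inner_commutator_apply_self (hSsym t) (hAskew t),
      real_inner_self_eq_norm_sq, inner_neg_left, Pi.neg_apply,
      div_le_div_iff₀ (pow_pos (hpos t) 2) (hpos t)]
    nlinarith [mul_le_mul_of_nonneg_right hCS (hpos t).le]

/-- Abstract Carleman-commutator energy identity and frequency function
estimate: if `F' = S F + A F` with `S` self-adjoint differentiable and `A`
skew-adjoint, and `N = -⟪S F, F⟫ / ‖F‖²` is the frequency function, then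
`(1/2)(‖F‖²)' + N ‖F‖² = 0` and `N' ≤ (⟪-S' F, F⟫ - ⟪[S,A] F, F⟫)/‖F‖²`. -/
theorem frequency_function_estimate {H : Type*}
    [NormedAddCommGroup H] [InnerProductSpace ℝ H] [CompleteSpace H]
    (F F' : ℝ → H) (S S' A : ℝ → H →L[ℝ] H) (N : ℝ → ℝ)
    (hF : ∀ t, HasDerivAt F (F' t) t)
    (hFne : ∀ t, F t ≠ 0)
    (hS : ∀ t, HasDerivAt S (S' t) t)
    (hSsym : ∀ t, ∀ v w : H, ⟪S t v, w⟫ = ⟪v, S t w⟫)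
    (hAskew : ∀ t, ∀ v w : H, ⟪A t v, w⟫ = -⟪v, A t w⟫)
    (heq : ∀ t, F' t = S t (F t) + A t (F t))
    (hN : ∀ t, N t = -⟪S t (F t), F t⟫ / ‖F t‖ ^ 2) :
    (∀ t, HasDerivAt (fun s => ‖F s‖ ^ 2) (-(2 * N t * ‖F t‖ ^ 2)) t) ∧
    (∀ t, ∃ d : ℝ, HasDerivAt N d t ∧
      d ≤ (⟪-(S' t (F t)), F t⟫
            - ⟪(S t ∘L A t - A t ∘L S t) (F t), F t⟫) / ‖F t‖ ^ 2) :=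
  frequency_function_estimate_general F F' S S' A N hF hFne hS hSsym hAskew heq hN
end

section
/- Let T > 0, h > 0, C₀ ∈ (0,1) and C ≥ 0. Let y : [0,T] → ℝ be differentiable and strictly positive, and let N : [0,T] → ℝ be differentiable, such that for all t ∈ (0,T): (1/2) y′(t) + N(t) y(t) = 0 and N′(t) ≤ ((1+C₀)/(T − t + h)) N(t) + C/h². Then for any 0 < t₁ < t₂ < t₃ ≤ T, one has y(t₂)^{1+M} ≤ y(t₁)^M · y(t₃) · e^D, where M = (∫_{t₂}^{t₃} (T − t + h)^{−(1+C₀)} dt) / (∫_{t₁}^{t₂} (T − t + h)^{−(1+C₀)} dt) and D = 2(1+M)(t₃ − t₁)² C / h². -/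
open Set MeasureTheory intervalIntegral Real

/-!
Write `c = T + h`, `p = 1 + C₀`, `q = C / h²`. The hypothesis on `N'` says exactly that the
weighted frequency `(c - t)^p N(t)` has derivative at most `q (c - t)^p`, hence it grows by at
most `q (t₃ - t₁) (c - s)^p` from any `s ∈ [t₁, t₂]` to any `t ∈ [t₂, t₃]`. Averaging over `s`
against the weight `(c - s)^(-p)` bounds `N` on `[t₂, t₃]` by a multiple of that weight, so
`∫_{t₂}^{t₃} N ≤ M (∫_{t₁}^{t₂} N + q (t₃ - t₁)(t₂ - t₁))`. Since `(log y)' = -2N`, this is the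
inequality between `log y(t₂) - log y(t₃)` and `M (log y(t₁) - log y(t₂))` that exponentiates
to the claim.
-/

theorem sub_le_mul_sub_of_hasDerivAt_le {f f' : ℝ → ℝ} {a b c : ℝ} (hab : a ≤ b)
    (hf : ∀ x ∈ Icc a b, HasDerivAt f (f' x) x) (hf' : ∀ x ∈ Ioo a b, f' x ≤ c) :
    f b - f a ≤ c * (b - a) := by
  refine (convex_Icc a b).image_sub_le_mul_sub_of_deriv_le
    (fun x hx => (hf x hx).continuousAt.continuousWithinAt) ?_ ?_
    a ⟨le_rfl, hab⟩ b ⟨hab, le_rfl⟩ hab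
  all_goals rw [interior_Icc]
  · exact fun x hx => (hf x (Ioo_subset_Icc_self hx)).differentiableAt.differentiableWithinAt
  · exact fun x hx => (hf x (Ioo_subset_Icc_self hx)).deriv ▸ hf' x hx

theorem hasDerivAt_sub_rpow {c p t : ℝ} (ht : t < c) :
    HasDerivAt (fun t => (c - t) ^ p) (-(p / (c - t)) * (c - t) ^ p) t := by
  have hct : 0 < c - t := sub_pos.mpr ht
  convert ((hasDerivAt_id' t).const_sub c).rpow_const (p := p) (Or.inl hct.ne') using 1
  rw [rpow_sub_one hct.ne']
  ring

theorem intervalIntegrable_sub_rpow {a b c r : ℝ} (ha : a < c) (hb : b < c) :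
    IntervalIntegrable (fun t => (c - t) ^ r) volume a b := by
  refine ContinuousOn.intervalIntegrable fun t ht => ?_
  have htc : t < c := by
    rcases le_total a b with hab | hab
    · rw [uIcc_of_le hab] at ht; exact ht.2.trans_lt hb
    · rw [uIcc_of_ge hab] at ht; exact ht.2.trans_lt ha
  exact (continuousAt_const.sub continuousAt_id).rpow_const
    (Or.inl (sub_pos.mpr htc).ne') |>.continuousWithinAt

section Frequency

variable {c p q : ℝ} {N N' : ℝ → ℝ}

theorem weighted_frequency_le {a b : ℝ} (hp : 0 ≤ p) (hq : 0 ≤ q) (hab : a ≤ b) (hbc : b < c)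
    (hN : ∀ t ∈ Icc a b, HasDerivAt N (N' t) t)
    (hineq : ∀ t ∈ Ioo a b, N' t ≤ p / (c - t) * N t + q) :
    (c - b) ^ p * N b ≤ (c - a) ^ p * N a + q * (b - a) * (c - a) ^ p := by
  have hderiv (t : ℝ) (ht : t ∈ Icc a b) : HasDerivAt (fun t => (c - t) ^ p * N t)
      (-(p / (c - t)) * (c - t) ^ p * N t + (c - t) ^ p * N' t) t :=
    (hasDerivAt_sub_rpow (ht.2.trans_lt hbc)).mul (hN t ht)
  have hbound (t : ℝ) (ht : t ∈ Ioo a b) :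
      -(p / (c - t)) * (c - t) ^ p * N t + (c - t) ^ p * N' t ≤ q * (c - a) ^ p := by
    have hpos : 0 < (c - t) ^ p := rpow_pos_of_pos (by linarith [ht.2]) p
    have hanti : (c - t) ^ p ≤ (c - a) ^ p :=
      rpow_le_rpow (by linarith [ht.2]) (by linarith [ht.1]) hp
    nlinarith [mul_le_mul_of_nonneg_left (hineq t ht) hpos.le, mul_le_mul_of_nonneg_left hanti hq]
  linarith [sub_le_mul_sub_of_hasDerivAt_le hab hderiv hbound]

theorem weighted_frequency_mul_integral_le {t₁ t₂ t₃ t : ℝ} (hp : 0 ≤ p) (hq : 0 ≤ q)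
    (h₁₂ : t₁ ≤ t₂) (ht : t ∈ Icc t₂ t₃) (h₃c : t₃ < c)
    (hN : ∀ t ∈ Icc t₁ t₃, HasDerivAt N (N' t) t)
    (hineq : ∀ t ∈ Ioo t₁ t₃, N' t ≤ p / (c - t) * N t + q) :
    (c - t) ^ p * N t * ∫ s in t₁..t₂, (c - s) ^ (-p) ≤
      (∫ s in t₁..t₂, N s) + q * (t₃ - t₁) * (t₂ - t₁) := by
  have hsub : uIcc t₁ t₂ ⊆ Icc t₁ t₃ := by
    rw [uIcc_of_le h₁₂]; exact Icc_subset_Icc_right (ht.1.trans ht.2)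
  have hpoint (s : ℝ) (hs : s ∈ Icc t₁ t₂) :
      (c - t) ^ p * N t * (c - s) ^ (-p) ≤ N s + q * (t₃ - t₁) := by
    have hst : Icc s t ⊆ Icc t₁ t₃ := Icc_subset_Icc hs.1 ht.2
    have hfreq := weighted_frequency_le hp hq (hs.2.trans ht.1) (ht.2.trans_lt h₃c)
      (fun u hu => hN u (hst hu)) (fun u hu => hineq u (Ioo_subset_Ioo hs.1 ht.2 hu))
    have hcs : 0 < c - s := by linarith [hs.2, ht.1, ht.2]
    have hinv : (c - s) ^ p * (c - s) ^ (-p) = 1 := by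
      rw [rpow_neg hcs.le, mul_inv_cancel₀ (rpow_pos_of_pos hcs p).ne']
    have hw : 0 ≤ (c - s) ^ (-p) := (rpow_pos_of_pos hcs _).le
    calc (c - t) ^ p * N t * (c - s) ^ (-p)
        ≤ ((c - s) ^ p * N s + q * (t - s) * (c - s) ^ p) * (c - s) ^ (-p) :=
          mul_le_mul_of_nonneg_right hfreq hw
      _ = N s + q * (t - s) := by linear_combination (N s + q * (t - s)) * hinv
      _ ≤ N s + q * (t₃ - t₁) := by gcongr; exacts [ht.2, hs.1]
  have hw : IntervalIntegrable (fun s => (c - s) ^ (-p)) volume t₁ t₂ :=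
    intervalIntegrable_sub_rpow (by linarith [ht.1, ht.2]) (by linarith [ht.1, ht.2])
  have hNint : IntervalIntegrable N volume t₁ t₂ := ContinuousOn.intervalIntegrable
    fun s hs => (hN s (hsub hs)).continuousAt.continuousWithinAt
  calc (c - t) ^ p * N t * ∫ s in t₁..t₂, (c - s) ^ (-p)
      = ∫ s in t₁..t₂, (c - t) ^ p * N t * (c - s) ^ (-p) :=
        (intervalIntegral.integral_const_mul _ _).symm
    _ ≤ ∫ s in t₁..t₂, (N s + q * (t₃ - t₁)) :=
        integral_mono_on h₁₂ (hw.const_mul _) (hNint.add intervalIntegrable_const) hpoint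
    _ = (∫ s in t₁..t₂, N s) + q * (t₃ - t₁) * (t₂ - t₁) := by
        rw [integral_add hNint intervalIntegrable_const, intervalIntegral.integral_const,
          smul_eq_mul]
        ring

theorem integral_le_mul_integral_add {t₁ t₂ t₃ : ℝ} (hp : 0 ≤ p) (hq : 0 ≤ q)
    (h₁₂ : t₁ < t₂) (h₂₃ : t₂ ≤ t₃) (h₃c : t₃ < c)
    (hN : ∀ t ∈ Icc t₁ t₃, HasDerivAt N (N' t) t)
    (hineq : ∀ t ∈ Ioo t₁ t₃, N' t ≤ p / (c - t) * N t + q) :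
    ∫ t in t₂..t₃, N t ≤
      (∫ t in t₂..t₃, (c - t) ^ (-p)) / (∫ t in t₁..t₂, (c - t) ^ (-p)) *
        ((∫ t in t₁..t₂, N t) + q * (t₃ - t₁) * (t₂ - t₁)) := by
  have h₂c : t₂ < c := h₂₃.trans_lt h₃c
  set W := ∫ t in t₁..t₂, (c - t) ^ (-p)
  set B := ((∫ t in t₁..t₂, N t) + q * (t₃ - t₁) * (t₂ - t₁)) / W
  have hW : 0 < W :=
    intervalIntegral_pos_of_pos_on (intervalIntegrable_sub_rpow (h₁₂.trans h₂c) h₂c)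
      (fun t ht => rpow_pos_of_pos (by linarith [ht.2]) _) h₁₂
  have hNB (t : ℝ) (ht : t ∈ Icc t₂ t₃) : N t ≤ B * (c - t) ^ (-p) := by
    have hct : 0 < c - t := by linarith [ht.2]
    have hinv : (c - t) ^ p * (c - t) ^ (-p) = 1 := by
      rw [rpow_neg hct.le, mul_inv_cancel₀ (rpow_pos_of_pos hct p).ne']
    have hfreq := weighted_frequency_mul_integral_le hp hq h₁₂.le ht h₃c hN hineq
    rw [← le_div_iff₀ hW] at hfreq
    calc N t = (c - t) ^ p * N t * (c - t) ^ (-p) := by linear_combination -N t * hinv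
      _ ≤ B * (c - t) ^ (-p) := by gcongr
  calc ∫ t in t₂..t₃, N t ≤ ∫ t in t₂..t₃, B * (c - t) ^ (-p) :=
        integral_mono_on h₂₃ (ContinuousOn.intervalIntegrable ?_)
          ((intervalIntegrable_sub_rpow h₂c h₃c).const_mul B) hNB
    _ = _ := by rw [intervalIntegral.integral_const_mul]; ring
  rw [uIcc_of_le h₂₃]
  exact fun t ht => (hN t ⟨h₁₂.le.trans ht.1, ht.2⟩).continuousAt.continuousWithinAt

end Frequency

theorem log_sub_log_eq_neg_two_mul_integral {y y' N : ℝ → ℝ} {a b : ℝ} (hab : a ≤ b)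
    (hy : ∀ t ∈ Icc a b, HasDerivAt y (y' t) t) (hpos : ∀ t ∈ Icc a b, 0 < y t)
    (hN : ContinuousOn N (Icc a b)) (heq : ∀ t ∈ Ioo a b, 1 / 2 * y' t + N t * y t = 0) :
    log (y b) - log (y a) = -2 * ∫ t in a..b, N t := by
  rw [← intervalIntegral.integral_const_mul]
  refine (integral_eq_sub_of_hasDerivAt_of_le hab
    (fun t ht => ((hy t ht).log (hpos t ht).ne').continuousAt.continuousWithinAt)
    (fun t ht => ?_) ((hN.intervalIntegrable_of_Icc hab).const_mul _)).symm
  have hyt := hpos t (Ioo_subset_Icc_self ht)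
  have hlog : y' t / y t = -2 * N t :=
    (div_eq_iff hyt.ne').mpr (by linear_combination 2 * heq t ht)
  exact hlog ▸ (hy t (Ioo_subset_Icc_self ht)).log hyt.ne'

theorem rpow_one_add_le_of_log_le {x₁ x₂ x₃ M D : ℝ} (h₁ : 0 < x₁) (h₂ : 0 < x₂) (h₃ : 0 < x₃)
    (hlog : (1 + M) * log x₂ ≤ M * log x₁ + log x₃ + D) :
    x₂ ^ (1 + M) ≤ x₁ ^ M * x₃ * exp D := by
  rw [rpow_def_of_pos h₂, rpow_def_of_pos h₁, ← exp_log h₃, ← exp_add, ← exp_add, exp_le_exp]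
  linarith

theorem log_convexity_lemma_general (T h C₀ C : ℝ) (hh : 0 < h)
    (hC₀ : C₀ ∈ Set.Ioo (0 : ℝ) 1) (hC : 0 ≤ C)
    (y N y' N' : ℝ → ℝ)
    (hy : ∀ t ∈ Set.Icc (0 : ℝ) T, HasDerivAt y (y' t) t)
    (hN : ∀ t ∈ Set.Icc (0 : ℝ) T, HasDerivAt N (N' t) t)
    (hypos : ∀ t ∈ Set.Icc (0 : ℝ) T, 0 < y t)
    (heq : ∀ t ∈ Set.Ioo (0 : ℝ) T, (1 / 2) * y' t + N t * y t = 0)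
    (hineq : ∀ t ∈ Set.Ioo (0 : ℝ) T,
      N' t ≤ ((1 + C₀) / (T - t + h)) * N t + C / h ^ 2) :
    ∀ t₁ t₂ t₃ : ℝ, 0 < t₁ → t₁ < t₂ → t₂ < t₃ → t₃ ≤ T →
      ∀ M D : ℝ,
        M = (∫ t in t₂..t₃, (T - t + h) ^ (-(1 + C₀))) /
            (∫ t in t₁..t₂, (T - t + h) ^ (-(1 + C₀))) →
        D = 2 * (1 + M) * (t₃ - t₁) ^ 2 * C / h ^ 2 →
        y t₂ ^ (1 + M) ≤ y t₁ ^ M * y t₃ * Real.exp D := by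
  intro t₁ t₂ t₃ ht₁ h₁₂ h₂₃ h₃T M D hM hD
  simp_rw [show ∀ t, T - t + h = T + h - t from fun t => by ring] at hineq hM
  have hsub {a b : ℝ} (ha : t₁ ≤ a) (hb : b ≤ t₃) : Icc a b ⊆ Icc 0 T :=
    Icc_subset_Icc (ht₁.le.trans ha) (hb.trans h₃T)
  have hcomp := integral_le_mul_integral_add (c := T + h) (by linarith [hC₀.1])
    (by positivity) h₁₂ h₂₃.le (by linarith) (fun t ht => hN t (hsub le_rfl le_rfl ht))
    (fun t ht => hineq t (Ioo_subset_Ioo ht₁.le h₃T ht))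
  rw [← hM] at hcomp
  have hlog {a b : ℝ} (ha : t₁ ≤ a) (hab : a ≤ b) (hb : b ≤ t₃) :=
    log_sub_log_eq_neg_two_mul_integral hab (fun t ht => hy t (hsub ha hb ht))
      (fun t ht => hypos t (hsub ha hb ht))
      (fun t ht => (hN t (hsub ha hb ht)).continuousAt.continuousWithinAt)
      (fun t ht => heq t (Ioo_subset_Ioo (ht₁.le.trans ha) (hb.trans h₃T) ht))
  have hlog₁₂ := hlog le_rfl h₁₂.le h₂₃.le
  have hlog₂₃ := hlog h₁₂.le h₂₃.le le_rfl
  have hM₀ : 0 ≤ M := hM ▸ div_nonneg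
    (intervalIntegral.integral_nonneg h₂₃.le fun t ht => rpow_nonneg (by linarith [ht.2]) _)
    (intervalIntegral.integral_nonneg h₁₂.le fun t ht => rpow_nonneg (by linarith [ht.2]) _)
  have hD' : 2 * M * (C / h ^ 2 * (t₃ - t₁) * (t₂ - t₁)) ≤ D := calc
    _ = 2 * (C / h ^ 2) * (t₃ - t₁) * (M * (t₂ - t₁)) := by ring
    _ ≤ 2 * (C / h ^ 2) * (t₃ - t₁) * ((1 + M) * (t₃ - t₁)) := by
      have : 0 ≤ t₃ - t₁ := by linarith
      gcongr
      nlinarith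
    _ = D := by rw [hD]; ring
  have hpos {t : ℝ} (ha : t₁ ≤ t) (hb : t ≤ t₃) := hypos t (hsub ha hb ⟨le_rfl, le_rfl⟩)
  refine rpow_one_add_le_of_log_le (hpos le_rfl (h₁₂.trans h₂₃).le) (hpos h₁₂.le h₂₃.le)
    (hpos (h₁₂.trans h₂₃).le le_rfl) ?_
  linear_combination 2 * hcomp + hD' + M * hlog₁₂ - hlog₂₃

/-- Logarithmic convexity lemma: if `y > 0` satisfies `(1/2) y' + N y = 0` with
`N' ≤ ((1+C₀)/(T-t+h)) N + C/h²` on `(0,T)`, then for `0 < t₁ < t₂ < t₃ ≤ T`,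
`y(t₂)^{1+M} ≤ y(t₁)^M y(t₃) e^D` with the explicit `M` and `D`. -/
theorem log_convexity_lemma (T h C₀ C : ℝ) (hT : 0 < T) (hh : 0 < h)
    (hC₀ : C₀ ∈ Set.Ioo (0 : ℝ) 1) (hC : 0 ≤ C)
    (y N y' N' : ℝ → ℝ)
    (hy : ∀ t ∈ Set.Icc (0 : ℝ) T, HasDerivAt y (y' t) t)
    (hN : ∀ t ∈ Set.Icc (0 : ℝ) T, HasDerivAt N (N' t) t)
    (hypos : ∀ t ∈ Set.Icc (0 : ℝ) T, 0 < y t)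
    (heq : ∀ t ∈ Set.Ioo (0 : ℝ) T, (1 / 2) * y' t + N t * y t = 0)
    (hineq : ∀ t ∈ Set.Ioo (0 : ℝ) T,
      N' t ≤ ((1 + C₀) / (T - t + h)) * N t + C / h ^ 2) :
    ∀ t₁ t₂ t₃ : ℝ, 0 < t₁ → t₁ < t₂ → t₂ < t₃ → t₃ ≤ T →
      ∀ M D : ℝ,
        M = (∫ t in t₂..t₃, (T - t + h) ^ (-(1 + C₀))) /
            (∫ t in t₁..t₂, (T - t + h) ^ (-(1 + C₀))) →
        D = 2 * (1 + M) * (t₃ - t₁) ^ 2 * C / h ^ 2 →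
        y t₂ ^ (1 + M) ≤ y t₁ ^ M * y t₃ * Real.exp D :=
  log_convexity_lemma_general T h C₀ C hh hC₀ hC y N y' N' hy hN hypos heq hineq
end

section
/- Let M, C₁, C₂ > 0, D ≥ 0, G ≥ 1, and let A, B, E ≥ 0 be real numbers with A ≤ B. Suppose that for every h > 0 one has A^{1+M} ≤ e^D e^{C₁/h} B^M E + e^D G e^{−C₂/h} B^{1+M}. Then, setting σ = M + (1+M)C₁/C₂, one has A^{1+σ} ≤ 2^{1+C₁/C₂} e^{D(1+C₁/C₂)} G^{C₁/C₂} B^σ E. -/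
/-!
Write the hypothesis as `X ≤ α e^{C₁/h} + β e^{-C₂/h}` with `X = A^{1+M} ≤ β`, and put
`K = 2β/X ≥ 2`. For `h = C₂ / log K` one has `e^{-C₂/h} = 1/K`, so the second term is `X/2`
and is absorbed, while `e^{C₁/h} = K^{C₁/C₂}`. This gives `X ≤ 2α K^{C₁/C₂}`, and multiplying
by `X^{C₁/C₂}` clears the denominator of `K`: `X^{1+C₁/C₂} ≤ 2α (2β)^{C₁/C₂}`.
-/

open Real

theorem Real.exp_div_div_log (a b : ℝ) {K : ℝ} (hK : 0 < K) :
    exp (a / (b / log K)) = K ^ (a / b) := by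
  rw [rpow_def_of_pos hK, div_div_eq_mul_div]
  ring_nf

theorem le_two_mul_rpow_of_forall_le_exp_add_exp {X α β C₁ C₂ : ℝ} (hX : 0 < X)
    (hXβ : X ≤ β) (hC₂ : 0 < C₂)
    (h : ∀ t, 0 < t → X ≤ α * exp (C₁ / t) + β * exp (-C₂ / t)) :
    X ≤ 2 * α * (2 * β / X) ^ (C₁ / C₂) := by
  set K := 2 * β / X with hK
  have hK_gt_one : 1 < K := by
    rw [hK, one_lt_div hX]
    linarith
  have hK_pos : 0 < K := one_pos.trans hK_gt_one
  have hβK : β * K ^ (-C₂ / C₂) = X / 2 := by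
    have hβ : β ≠ 0 := (hX.trans_le hXβ).ne'
    rw [neg_div, div_self hC₂.ne', rpow_neg_one, hK]
    field_simp
  have := h (C₂ / log K) (div_pos hC₂ (log_pos hK_gt_one))
  rw [exp_div_div_log _ _ hK_pos, exp_div_div_log _ _ hK_pos, hβK] at this
  linarith

theorem rpow_one_add_div_le_of_forall_le_exp_add_exp {X α β C₁ C₂ : ℝ} (hX : 0 ≤ X)
    (hα : 0 ≤ α) (hXβ : X ≤ β) (hC₁ : 0 ≤ C₁) (hC₂ : 0 < C₂)
    (h : ∀ t, 0 < t → X ≤ α * exp (C₁ / t) + β * exp (-C₂ / t)) :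
    X ^ (1 + C₁ / C₂) ≤ 2 * α * (2 * β) ^ (C₁ / C₂) := by
  have hc : 0 ≤ C₁ / C₂ := div_nonneg hC₁ hC₂.le
  have hβ : 0 ≤ β := hX.trans hXβ
  rcases hX.eq_or_lt with rfl | hX
  · rw [zero_rpow (by positivity)]
    positivity
  calc X ^ (1 + C₁ / C₂) = X * X ^ (C₁ / C₂) := by rw [rpow_add hX, rpow_one]
    _ ≤ 2 * α * (2 * β / X) ^ (C₁ / C₂) * X ^ (C₁ / C₂) := by
      gcongr
      exact le_two_mul_rpow_of_forall_le_exp_add_exp hX hXβ hC₂ h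
    _ = 2 * α * (2 * β) ^ (C₁ / C₂) := by
      rw [mul_assoc, ← mul_rpow (by positivity) hX.le, div_mul_cancel₀ _ hX.ne']

/-- Optimization-in-`h` argument (Step 7 of the paper): if for every `h > 0`
one has `A^{1+M} ≤ e^D e^{C₁/h} B^M E + e^D G e^{-C₂/h} B^{1+M}` with
`A ≤ B`, then with `σ = M + (1+M)C₁/C₂` one gets
`A^{1+σ} ≤ 2^{1+C₁/C₂} e^{D(1+C₁/C₂)} G^{C₁/C₂} B^σ E`. -/
theorem optimize_in_h (M C₁ C₂ D G A B E : ℝ)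
    (hM : 0 < M) (hC₁ : 0 < C₁) (hC₂ : 0 < C₂) (hD : 0 ≤ D) (hG : 1 ≤ G)
    (hA : 0 ≤ A) (hB : 0 ≤ B) (hE : 0 ≤ E) (hAB : A ≤ B)
    (h : ∀ h' : ℝ, 0 < h' →
      A ^ (1 + M) ≤ Real.exp D * Real.exp (C₁ / h') * B ^ M * E
        + Real.exp D * G * Real.exp (-C₂ / h') * B ^ (1 + M)) :
    A ^ (1 + (M + (1 + M) * C₁ / C₂)) ≤
      (2 : ℝ) ^ (1 + C₁ / C₂) * Real.exp (D * (1 + C₁ / C₂)) * G ^ (C₁ / C₂)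
        * B ^ (M + (1 + M) * C₁ / C₂) * E := by
  have hβ : A ^ (1 + M) ≤ exp D * G * B ^ (1 + M) := by
    have : 1 ≤ exp D * G := one_le_mul_of_one_le_of_one_le (one_le_exp hD) hG
    have : A ^ (1 + M) ≤ B ^ (1 + M) := rpow_le_rpow hA hAB (by positivity)
    nlinarith [rpow_nonneg hB (1 + M)]
  have key := rpow_one_add_div_le_of_forall_le_exp_add_exp (rpow_nonneg hA (1 + M))
    (by positivity : 0 ≤ exp D * B ^ M * E) hβ hC₁.le hC₂
    fun t ht => (h t ht).trans_eq (by ring)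
  have hσ : 0 < M + (1 + M) * C₁ / C₂ := by positivity
  calc A ^ (1 + (M + (1 + M) * C₁ / C₂)) = (A ^ (1 + M)) ^ (1 + C₁ / C₂) := by
        rw [← rpow_mul hA]; ring_nf
    _ ≤ 2 * (exp D * B ^ M * E) * (2 * (exp D * G * B ^ (1 + M))) ^ (C₁ / C₂) := key
    _ = _ := by
      rw [rpow_add two_pos, rpow_one, mul_add, mul_one, exp_add, exp_mul,
        rpow_add' hB hσ.ne', mul_div_assoc, rpow_mul hB,
        mul_rpow, mul_rpow, mul_rpow]
      · ring
      all_goals positivity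
end
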